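/- Let G = (V,E) be an edge-colored graph with colors {1,...,p} and let λ be the maximum, over nontrivial subsets S ⊂ V, of |c(∂S)|. Fix a set S achieving λ and a set F ⊆ ∂S consisting of exactly one edge of each color appearing in ∂S. If some color i does not appear in ∂S, then the number of edges of color i is at most 2·(λ choose 2). -/

import Mathlib

/-!
Every edge of the missing colour `i` has both ends on the same side of `S`. Each end `u` of such
an edge lies on an edge of `F`: otherwise toggling `u` across the cut keeps all of `F` in the cut
and adds the `i`-edge, giving `λ + 1` colours. An edge of `F` has exactly one end on each side, so
on either side the ends of `i`-edges inject into `F`, and at most `λ choose 2` edges of colour `i`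
lie on that side.
-/

open Set

/-- The edge cut of `S`: edges of `G` with exactly one endpoint in `S`. -/
def cutEdges {V : Type*} (G : SimpleGraph V) (S : Set V) : Set (Sym2 V) :=
  {e | e ∈ G.edgeSet ∧ ∃ u v, e = s(u, v) ∧ u ∈ S ∧ v ∉ S}

theorem ncard_le_choose_ncard_two {V : Type*} {W : Set V} (hW : W.Finite) {X : Set (Sym2 V)}
    (hX : ∀ e ∈ X, ¬e.IsDiag ∧ ∀ x ∈ e, x ∈ W) : X.ncard ≤ W.ncard.choose 2 := by
  classical
  calc X.ncard ≤ (↑(hW.toFinset.offDiag.image Sym2.mk.uncurry) : Set (Sym2 V)).ncard := by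
        refine ncard_le_ncard (fun e he => ?_) (Finset.finite_toSet _)
        induction e using Sym2.ind with | _ u v => ?_
        obtain ⟨huv, hmem⟩ := hX _ he
        simp only [Finset.coe_image, Finset.coe_offDiag, Finite.coe_toFinset]
        exact ⟨(u, v), ⟨hmem u (Sym2.mem_mk_left u v), hmem v (Sym2.mem_mk_right u v), huv⟩, rfl⟩
    _ = W.ncard.choose 2 := by
        rw [ncard_coe_finset, Sym2.card_image_offDiag, ncard_eq_toFinset_card W hW]

theorem finite_of_forall_exists_mem {V : Type*} {W : Set V} {F : Set (Sym2 V)} (hF : F.Finite)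
    (hW : ∀ x ∈ W, ∃ f ∈ F, x ∈ f) : W.Finite := by
  classical
  refine (hF.biUnion fun f _ => f.toFinset.finite_toSet).subset fun x hx => ?_
  obtain ⟨f, hf, hxf⟩ := hW x hx
  exact mem_biUnion hf (Sym2.mem_toFinset.2 hxf)

theorem ncard_le_ncard_of_forall_subsingleton {V : Type*} {W : Set V} {F : Set (Sym2 V)}
    (hF : F.Finite) (hW : ∀ x ∈ W, ∃ f ∈ F, x ∈ f) (hFW : ∀ f ∈ F, {x ∈ W | x ∈ f}.Subsingleton) :
    W.ncard ≤ F.ncard := by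
  rw [ncard_eq_toFinset_card W (finite_of_forall_exists_mem hF hW), ncard_eq_toFinset_card F hF]
  exact Finset.card_le_card_of_forall_subsingleton (· ∈ ·) (by simpa using hW)
    (by simpa using hFW)

theorem ncard_le_choose_two_of_cover {V : Type*} {A : Set V} {F X : Set (Sym2 V)}
    (hF : F.Finite) (hFA : ∀ f ∈ F, {x ∈ A | x ∈ f}.Subsingleton)
    (hX : ∀ e ∈ X, ¬e.IsDiag ∧ ∀ x ∈ e, x ∈ A ∧ ∃ f ∈ F, x ∈ f) :
    X.ncard ≤ F.ncard.choose 2 := by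
  set W := {x ∈ A | ∃ f ∈ F, x ∈ f}
  have hW : ∀ x ∈ W, ∃ f ∈ F, x ∈ f := fun x hx => hx.2
  have hFW : ∀ f ∈ F, {x ∈ W | x ∈ f}.Subsingleton := fun f hf =>
    (hFA f hf).anti fun x hx => ⟨hx.1.1, hx.2⟩
  calc X.ncard ≤ W.ncard.choose 2 :=
        ncard_le_choose_ncard_two (finite_of_forall_exists_mem hF hW) hX
    _ ≤ F.ncard.choose 2 := Nat.choose_le_choose 2 (ncard_le_ncard_of_forall_subsingleton hF hW hFW)

section Cut

variable {V : Type*} {G : SimpleGraph V} {S T : Set V}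

theorem mk_mem_cutEdges_iff {u v : V} :
    s(u, v) ∈ cutEdges G S ↔ G.Adj u v ∧ ¬(u ∈ S ↔ v ∈ S) := by
  simp only [cutEdges, mem_ofPred_eq, SimpleGraph.mem_edgeSet, Sym2.eq_iff]
  constructor
  · rintro ⟨h, a, b, (⟨rfl, rfl⟩ | ⟨rfl, rfl⟩), ha, hb⟩ <;> tauto
  · rintro ⟨h, hs⟩
    by_cases hu : u ∈ S
    · exact ⟨h, u, v, Or.inl ⟨rfl, rfl⟩, hu, by tauto⟩
    · exact ⟨h, v, u, Or.inr ⟨rfl, rfl⟩, by tauto, hu⟩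

theorem mem_cutEdges_iff_of_forall_mem_iff {e : Sym2 V} (h : ∀ x ∈ e, (x ∈ S ↔ x ∈ T)) :
    e ∈ cutEdges G S ↔ e ∈ cutEdges G T := by
  induction e using Sym2.ind with | _ u v => ?_
  rw [mk_mem_cutEdges_iff, mk_mem_cutEdges_iff, h u (Sym2.mem_mk_left u v),
    h v (Sym2.mem_mk_right u v)]

theorem nonempty_and_ne_univ_of_mem_cutEdges {e : Sym2 V} (he : e ∈ cutEdges G S) :
    S.Nonempty ∧ S ≠ univ := by
  obtain ⟨-, u, v, -, hu, hv⟩ := he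
  exact ⟨⟨u, hu⟩, ne_univ_iff_exists_notMem S |>.2 ⟨v, hv⟩⟩

theorem eq_of_mem_of_mem_cutEdges {f : Sym2 V} (hf : f ∈ cutEdges G S) {x y : V} (hx : x ∈ f)
    (hy : y ∈ f) (hxy : x ∈ S ↔ y ∈ S) : x = y := by
  obtain ⟨-, u, v, rfl, hu, hv⟩ := hf
  rcases Sym2.mem_iff.1 hx with rfl | rfl <;> rcases Sym2.mem_iff.1 hy with rfl | rfl <;> tauto

theorem mem_iff_mem_of_notMem_cutEdges {e : Sym2 V} (he : e ∈ G.edgeSet)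
    (hS : e ∉ cutEdges G S) {x y : V} (hx : x ∈ e) (hy : y ∈ e) : x ∈ S ↔ y ∈ S := by
  induction e using Sym2.ind with | _ u v => ?_
  rw [mk_mem_cutEdges_iff, not_and, not_not] at hS
  have := hS he
  rcases Sym2.mem_iff.1 hx with rfl | rfl <;> rcases Sym2.mem_iff.1 hy with rfl | rfl <;> tauto

theorem mk_mem_cutEdges_symmDiff_singleton {u v : V} (huv : G.Adj u v)
    (hS : s(u, v) ∉ cutEdges G S) : s(u, v) ∈ cutEdges G (symmDiff S {u}) := by
  rw [mk_mem_cutEdges_iff] at hS ⊢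
  simp only [mem_symmDiff, mem_singleton_iff, (G.ne_of_adj huv).symm]
  tauto

theorem exists_mem_of_ncard_image_cutEdges_le {p : ℕ} {c : Sym2 V → Fin p}
    (hmax : ∀ T : Set V, T.Nonempty → T ≠ Set.univ →
      (c '' cutEdges G T).ncard ≤ (c '' cutEdges G S).ncard)
    {F : Set (Sym2 V)} (hF : F ⊆ cutEdges G S) (hFimg : c '' F = c '' cutEdges G S)
    {e : Sym2 V} (he : e ∈ G.edgeSet) (hce : c e ∉ c '' cutEdges G S) {u : V} (hu : u ∈ e) :
    ∃ f ∈ F, u ∈ f := by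
  by_contra! huF
  obtain ⟨v, rfl⟩ := hu
  have heT : s(u, v) ∈ cutEdges G (symmDiff S {u}) :=
    mk_mem_cutEdges_symmDiff_singleton he fun h => hce ⟨_, h, rfl⟩
  have hFT : F ⊆ cutEdges G (symmDiff S {u}) := fun f hf =>
    (mem_cutEdges_iff_of_forall_mem_iff fun x hx => by
      simp [mem_symmDiff, show x ≠ u from fun h => huF f hf (h ▸ hx)]).1 (hF hf)
  have hsub : insert (c s(u, v)) (c '' cutEdges G S) ⊆ c '' cutEdges G (symmDiff S {u}) := by
    rw [insert_subset_iff, ← hFimg]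
    exact ⟨mem_image_of_mem c heT, image_mono hFT⟩
  obtain ⟨hne, hnu⟩ := nonempty_and_ne_univ_of_mem_cutEdges heT
  have := ncard_le_ncard hsub (toFinite _)
  rw [ncard_insert_of_notMem hce (toFinite _)] at this
  exact absurd (hmax _ hne hnu) (by omega)

end Cut

theorem stmt7_general {V : Type*} (G : SimpleGraph V) (p : ℕ) (c : Sym2 V → Fin p)
    (S : Set V)
    (hmax : ∀ T : Set V, T.Nonempty → T ≠ Set.univ →
      (c '' cutEdges G T).ncard ≤ (c '' cutEdges G S).ncard)
    (F : Set (Sym2 V)) (hF : F ⊆ cutEdges G S) (hFinj : Set.InjOn c F)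
    (hFimg : c '' F = c '' cutEdges G S)
    (i : Fin p) (hi : i ∉ c '' cutEdges G S) :
    {e ∈ G.edgeSet | c e = i}.ncard ≤ 2 * Nat.choose (c '' cutEdges G S).ncard 2 := by
  set X := {e ∈ G.edgeSet | c e = i}
  have hFfin : F.Finite := (toFinite (c '' F)).of_finite_image hFinj
  have hside : ∀ A : Set V, (∀ f ∈ F, {x ∈ A | x ∈ f}.Subsingleton) →
      {e ∈ X | ∀ x ∈ e, x ∈ A}.ncard ≤ F.ncard.choose 2 := fun A hA =>
    ncard_le_choose_two_of_cover hFfin hA fun e he =>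
      ⟨G.not_isDiag_of_mem_edgeSet he.1.1, fun x hx => ⟨he.2 x hx,
        exists_mem_of_ncard_image_cutEdges_le hmax hF hFimg he.1.1 (he.1.2 ▸ hi) hx⟩⟩
  have hsplit : X = {e ∈ X | ∀ x ∈ e, x ∈ S} ∪ {e ∈ X | ∀ x ∈ e, x ∈ Sᶜ} := by
    refine subset_antisymm (fun e he => ?_) (union_subset (sep_subset _ _) (sep_subset _ _))
    have hsame : ∀ x ∈ e, x ∈ S ↔ e.out.1 ∈ S := fun x hx =>
      mem_iff_mem_of_notMem_cutEdges he.1 (fun h => hi ⟨e, h, he.2⟩) hx (Sym2.out_fst_mem e)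
    by_cases h : e.out.1 ∈ S
    · exact Or.inl ⟨he, fun x hx => (hsame x hx).2 h⟩
    · exact Or.inr ⟨he, fun x hx => mt (hsame x hx).1 h⟩
  rw [← hFimg, hFinj.ncard_image, hsplit, two_mul]
  refine (ncard_union_le _ _).trans (add_le_add (hside S ?_) (hside Sᶜ ?_)) <;>
    intro f hf x hx y hy
  · exact eq_of_mem_of_mem_cutEdges (hF hf) hx.2 hy.2 (iff_of_true hx.1 hy.1)
  · exact eq_of_mem_of_mem_cutEdges (hF hf) hx.2 hy.2 (iff_of_false hx.1 hy.1)

/-- Claim on missing colors: if `S` achieves the maximum number `λ` of cut colors, `F`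
consists of exactly one edge of each color of the cut, and color `i` is missing from the
cut, then the color class of `i` has at most `2 * (λ choose 2)` edges. -/
theorem stmt7 {V : Type*} [Fintype V] (G : SimpleGraph V) (p : ℕ) (c : Sym2 V → Fin p)
    (S : Set V) (hS : S.Nonempty) (hS' : S ≠ Set.univ)
    (hmax : ∀ T : Set V, T.Nonempty → T ≠ Set.univ →
      (c '' cutEdges G T).ncard ≤ (c '' cutEdges G S).ncard)
    (F : Set (Sym2 V)) (hF : F ⊆ cutEdges G S) (hFinj : Set.InjOn c F)
    (hFimg : c '' F = c '' cutEdges G S)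
    (i : Fin p) (hi : i ∉ c '' cutEdges G S) :
    {e ∈ G.edgeSet | c e = i}.ncard ≤ 2 * Nat.choose (c '' cutEdges G S).ncard 2 :=
  stmt7_general G p c S hmax F hF hFinj hFimg i hi
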